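/- Let A, B, C, D be jointly distributed random variables on a finite probability space. If H(C|A,B) = 0 and I(A:B|C) = 0, then I(C:D) ≤ I(C:D|A) + I(C:D|B) + I(A:B). -/
import Mathlib


open scoped BigOperators Classical

noncomputable section

/-- `p` is a probability mass function on the finite type `Ω`. -/
def IsPMF {Ω : Type*} [Fintype Ω] (p : Ω → ℝ) : Prop :=
  (∀ ω, 0 ≤ p ω) ∧ ∑ ω, p ω = 1

/-- Probability of the event `X = s` under `p`. -/
def prOf {Ω S : Type*} [Fintype Ω] [DecidableEq S] (p : Ω → ℝ) (X : Ω → S) (s : S) : ℝ :=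
  ∑ ω ∈ Finset.univ.filter (fun ω => X ω = s), p ω

/-- Shannon entropy (in bits) of the random variable `X` under the pmf `p`. -/
def ent {Ω S : Type*} [Fintype Ω] [Fintype S] [DecidableEq S] (p : Ω → ℝ) (X : Ω → S) : ℝ :=
  - ∑ s : S, prOf p X s * Real.logb 2 (prOf p X s)

/-- Mutual information `I(X:Y) = H(X) + H(Y) - H(X,Y)`. -/
def mi {Ω S T : Type*} [Fintype Ω] [Fintype S] [Fintype T] [DecidableEq S] [DecidableEq T]
    (p : Ω → ℝ) (X : Ω → S) (Y : Ω → T) : ℝ :=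
  ent p X + ent p Y - ent p (fun ω => (X ω, Y ω))

/-- Conditional mutual information `I(X:Y|Z) = H(X,Z) + H(Y,Z) - H(X,Y,Z) - H(Z)`. -/
def cmi {Ω S T U : Type*} [Fintype Ω] [Fintype S] [Fintype T] [Fintype U]
    [DecidableEq S] [DecidableEq T] [DecidableEq U]
    (p : Ω → ℝ) (X : Ω → S) (Y : Ω → T) (Z : Ω → U) : ℝ :=
  ent p (fun ω => (X ω, Z ω)) + ent p (fun ω => (Y ω, Z ω))
    - ent p (fun ω => (X ω, Y ω, Z ω)) - ent p Z

/-- Conditional entropy `H(X|Y) = H(X,Y) - H(Y)`. -/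
def condEnt {Ω S T : Type*} [Fintype Ω] [Fintype S] [Fintype T] [DecidableEq S] [DecidableEq T]
    (p : Ω → ℝ) (X : Ω → S) (Y : Ω → T) : ℝ :=
  ent p (fun ω => (X ω, Y ω)) - ent p Y

/-- The four coordinate random variables on `Bool × Bool × Bool × Bool`. -/
def vA : Bool × Bool × Bool × Bool → Bool := fun ω => ω.1
def vB : Bool × Bool × Bool × Bool → Bool := fun ω => ω.2.1
def vC : Bool × Bool × Bool × Bool → Bool := fun ω => ω.2.2.1
def vD : Bool × Bool × Bool × Bool → Bool := fun ω => ω.2.2.2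
namespace NCIproof
open Finset Real

lemma gibbs_key {ι : Type*} (s : Finset ι) (x y : ι → ℝ)
    (hx : ∀ i ∈ s, 0 ≤ x i) (hy0 : ∀ i ∈ s, 0 ≤ y i)
    (hy : ∀ i ∈ s, 0 < x i → 0 < y i) :
    ∀ i ∈ s, x i * Real.logb 2 (y i / x i) ≤ (y i - x i) / Real.log 2 := by
  have hlog2 : (0:ℝ) < Real.log 2 := Real.log_pos one_lt_two
  intro i hi
  rcases eq_or_lt_of_le (hx i hi) with h0 | hxi
  · rw [← h0]
    simp only [zero_mul, sub_zero]
    exact div_nonneg (hy0 i hi) hlog2.le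
  · have hyi := hy i hi hxi
    have hlog : Real.log (y i / x i) ≤ y i / x i - 1 :=
      Real.log_le_sub_one_of_pos (div_pos hyi hxi)
    have h2 : x i * Real.log (y i / x i) ≤ y i - x i := by
      calc x i * Real.log (y i / x i) ≤ x i * (y i / x i - 1) :=
            mul_le_mul_of_nonneg_left hlog hxi.le
        _ = y i - x i := by field_simp
    rw [Real.logb, ← mul_div_assoc]
    gcongr

lemma gibbs_le {ι : Type*} (s : Finset ι) (x y : ι → ℝ)
    (hx : ∀ i ∈ s, 0 ≤ x i) (hy0 : ∀ i ∈ s, 0 ≤ y i)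
    (hy : ∀ i ∈ s, 0 < x i → 0 < y i)
    (hsum : ∑ i ∈ s, y i ≤ ∑ i ∈ s, x i) :
    ∑ i ∈ s, x i * Real.logb 2 (y i / x i) ≤ 0 := by
  have hlog2 : (0:ℝ) < Real.log 2 := Real.log_pos one_lt_two
  calc ∑ i ∈ s, x i * Real.logb 2 (y i / x i)
      ≤ ∑ i ∈ s, (y i - x i) / Real.log 2 :=
        Finset.sum_le_sum (gibbs_key s x y hx hy0 hy)
    _ = (∑ i ∈ s, y i - ∑ i ∈ s, x i) / Real.log 2 := by
        rw [← Finset.sum_div, Finset.sum_sub_distrib]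
    _ ≤ 0 := div_nonpos_of_nonpos_of_nonneg (by linarith) hlog2.le

lemma gibbs_eq {ι : Type*} (s : Finset ι) (x y : ι → ℝ)
    (hx : ∀ i ∈ s, 0 ≤ x i) (hy0 : ∀ i ∈ s, 0 ≤ y i)
    (hy : ∀ i ∈ s, 0 < x i → 0 < y i)
    (hsum : ∑ i ∈ s, y i ≤ ∑ i ∈ s, x i)
    (heq : ∑ i ∈ s, x i * Real.logb 2 (y i / x i) = 0) :
    ∀ i ∈ s, y i = x i := by
  have hlog2 : (0:ℝ) < Real.log 2 := Real.log_pos one_lt_two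
  have hl2 : Real.log 2 ≠ 0 := hlog2.ne'
  have hkey := gibbs_key s x y hx hy0 hy
  have hs1 : ∑ i ∈ s, (y i - x i) / Real.log 2 ≤ 0 := by
    rw [← Finset.sum_div, Finset.sum_sub_distrib]
    exact div_nonpos_of_nonpos_of_nonneg (by linarith) hlog2.le
  have hall : ∀ i ∈ s, x i * Real.logb 2 (y i / x i) = (y i - x i) / Real.log 2 := by
    have hle := Finset.sum_le_sum hkey
    have h0 : ∑ i ∈ s, x i * Real.logb 2 (y i / x i) = ∑ i ∈ s, (y i - x i) / Real.log 2 := by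
      linarith
    exact (Finset.sum_eq_sum_iff_of_le hkey).mp h0
  intro i hi
  have h := hall i hi
  rcases eq_or_lt_of_le (hx i hi) with h0 | hxi
  · rw [← h0] at h ⊢
    simp only [zero_mul, sub_zero] at h
    rcases div_eq_zero_iff.mp h.symm with h' | h'
    · exact h'
    · exact absurd h' hl2
  · have hyi := hy i hi hxi
    rw [Real.logb, ← mul_div_assoc] at h
    have h' : x i * Real.log (y i / x i) = y i - x i := by
      field_simp at h; linarith
    by_contra hne
    have hne1 : y i / x i ≠ 1 := by
      intro h1
      rw [div_eq_one_iff_eq hxi.ne'] at h1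
      exact hne h1
    have hlt : Real.log (y i / x i) < y i / x i - 1 :=
      Real.log_lt_sub_one_of_pos (div_pos hyi hxi) hne1
    have : x i * Real.log (y i / x i) < y i - x i := by
      calc x i * Real.log (y i / x i) < x i * (y i / x i - 1) :=
            (mul_lt_mul_iff_right₀ hxi).mpr hlt
        _ = y i - x i := by field_simp
    linarith


variable {Ω : Type*} [Fintype Ω] {p : Ω → ℝ}

lemma prOf_nonneg {S : Type*} [DecidableEq S] (hp0 : ∀ ω, 0 ≤ p ω) (X : Ω → S) (s : S) :
    0 ≤ prOf p X s :=
  Finset.sum_nonneg fun ω _ => hp0 ω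

lemma le_prOf {S : Type*} [DecidableEq S] (hp0 : ∀ ω, 0 ≤ p ω) (X : Ω → S) (ω : Ω) :
    p ω ≤ prOf p X (X ω) :=
  Finset.single_le_sum (f := p) (fun ω' _ => hp0 ω') (by simp)

lemma prOf_pos {S : Type*} [DecidableEq S] (hp0 : ∀ ω, 0 ≤ p ω) (X : Ω → S) {ω : Ω}
    (hω : 0 < p ω) : 0 < prOf p X (X ω) :=
  lt_of_lt_of_le hω (le_prOf hp0 X ω)

lemma prOf_congr {S T : Type*} [DecidableEq S] [DecidableEq T] {X : Ω → S} {Y : Ω → T}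
    {s : S} {t : T} (h : ∀ ω, X ω = s ↔ Y ω = t) : prOf p X s = prOf p Y t := by
  unfold prOf
  apply Finset.sum_congr _ (fun _ _ => rfl)
  ext ω
  simp [h ω]

lemma prOf_mono {S T : Type*} [DecidableEq S] [DecidableEq T] (hp0 : ∀ ω, 0 ≤ p ω)
    {X : Ω → S} {Y : Ω → T} {s : S} {t : T} (h : ∀ ω, X ω = s → Y ω = t) :
    prOf p X s ≤ prOf p Y t := by
  apply Finset.sum_le_sum_of_subset_of_nonneg
  · intro ω hω
    simp only [Finset.mem_filter, Finset.mem_univ, true_and] at hω ⊢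
    exact h ω hω
  · intro ω _ _; exact hp0 ω

lemma sum_prOf_mul {S : Type*} [Fintype S] [DecidableEq S] (X : Ω → S) (G : S → ℝ) :
    ∑ s, prOf p X s * G s = ∑ ω, p ω * G (X ω) := by
  calc ∑ s, prOf p X s * G s
      = ∑ s, ∑ ω ∈ Finset.univ.filter (fun ω => X ω = s), p ω * G (X ω) := by
        refine Finset.sum_congr rfl fun s _ => ?_
        rw [prOf, Finset.sum_mul]
        exact Finset.sum_congr rfl fun ω hω => by
          rw [(Finset.mem_filter.mp hω).2]
    _ = ∑ ω, p ω * G (X ω) := Finset.sum_fiberwise _ _ _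

lemma sum_prOf {S : Type*} [Fintype S] [DecidableEq S] (X : Ω → S) :
    ∑ s, prOf p X s = ∑ ω, p ω := by
  have := sum_prOf_mul (p := p) X (fun _ => (1:ℝ))
  simpa using this

lemma ent_omega {S : Type*} [Fintype S] [DecidableEq S] (X : Ω → S) :
    ent p X = - ∑ ω, p ω * Real.logb 2 (prOf p X (X ω)) := by
  rw [ent, sum_prOf_mul X (fun s => Real.logb 2 (prOf p X s))]

lemma prOf_marginal {S T : Type*} [DecidableEq S] [Fintype T] [DecidableEq T]
    (X : Ω → S) (Y : Ω → T) (s : S) :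
    ∑ t, prOf p (fun ω => (X ω, Y ω)) (s, t) = prOf p X s := by
  unfold prOf
  rw [← Finset.sum_fiberwise (Finset.univ.filter (fun ω => X ω = s)) Y p]
  refine Finset.sum_congr rfl fun t _ => ?_
  apply Finset.sum_congr _ (fun _ _ => rfl)
  rw [Finset.filter_filter]
  ext ω
  simp [Prod.ext_iff, and_comm]

lemma exists_of_prOf_pos {S : Type*} [DecidableEq S] (hp0 : ∀ ω, 0 ≤ p ω) {X : Ω → S} {s : S}
    (h : 0 < prOf p X s) : ∃ ω, 0 < p ω ∧ X ω = s := by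
  by_contra hc
  push_neg at hc
  have : prOf p X s = 0 := by
    apply Finset.sum_eq_zero
    intro ω hω
    have hXs := (Finset.mem_filter.mp hω).2
    have := hc ω
    rcases lt_or_eq_of_le (hp0 ω) with h' | h'
    · exact absurd hXs (this h')
    · exact h'.symm
  linarith

lemma support_eq {S T : Type*} [DecidableEq S] [DecidableEq T] (hp0 : ∀ ω, 0 ≤ p ω)
    {X : Ω → S} {Y : Ω → T} {s : S} {t : T}
    (himp : ∀ ω, Y ω = t → X ω = s) (heq : prOf p X s = prOf p Y t)
    {ω : Ω} (hω : 0 < p ω) (hXω : X ω = s) : Y ω = t := by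
  by_contra hY
  have hsub : Finset.univ.filter (fun ω => Y ω = t) ⊆ Finset.univ.filter (fun ω => X ω = s) := by
    intro ω' hω'
    simp only [Finset.mem_filter, Finset.mem_univ, true_and] at hω' ⊢
    exact himp ω' hω'
  have hsd := Finset.sum_sdiff (f := p) hsub
  have hmem : ω ∈ Finset.univ.filter (fun ω => X ω = s) \
      Finset.univ.filter (fun ω => Y ω = t) := by
    simp [hXω, hY]
  have hle : p ω ≤ ∑ ω' ∈ Finset.univ.filter (fun ω => X ω = s) \
      Finset.univ.filter (fun ω => Y ω = t), p ω' :=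
    Finset.single_le_sum (fun ω' _ => hp0 ω') hmem
  unfold prOf at heq
  linarith



set_option linter.unusedSectionVars false

section Main
variable {Ω α β γ δ : Type*} [Fintype Ω] [Fintype α] [Fintype β] [Fintype γ] [Fintype δ]
  [DecidableEq α] [DecidableEq β] [DecidableEq γ] [DecidableEq δ]
  {p : Ω → ℝ} {A : Ω → α} {B : Ω → β} {C : Ω → γ} {D : Ω → δ}

lemma margACD (a : α) (d : δ) :
    ∑ c, prOf p (fun ω => (A ω, C ω, D ω)) (a, c, d) = prOf p (fun ω => (A ω, D ω)) (a, d) := by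
  rw [← prOf_marginal (p := p) (fun ω => (A ω, D ω)) C (a, d)]
  exact Finset.sum_congr rfl fun c _ => prOf_congr fun ω => by
    simp only [Prod.ext_iff] ; tauto

lemma margBCD (c : γ) (d : δ) :
    ∑ b, prOf p (fun ω => (B ω, C ω, D ω)) (b, c, d) = prOf p (fun ω => (C ω, D ω)) (c, d) := by
  rw [← prOf_marginal (p := p) (fun ω => (C ω, D ω)) B (c, d)]
  exact Finset.sum_congr rfl fun b _ => prOf_congr fun ω => by
    simp only [Prod.ext_iff] ; tauto

lemma margBD (d : δ) :
    ∑ b, prOf p (fun ω => (B ω, D ω)) (b, d) = prOf p D d := by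
  rw [← prOf_marginal (p := p) D B d]
  exact Finset.sum_congr rfl fun b _ => prOf_congr fun ω => by
    simp only [Prod.ext_iff] ; tauto

lemma margAC (c : γ) :
    ∑ a, prOf p (fun ω => (A ω, C ω)) (a, c) = prOf p C c := by
  rw [← prOf_marginal (p := p) C A c]
  exact Finset.sum_congr rfl fun a _ => prOf_congr fun ω => by
    simp only [Prod.ext_iff] ; tauto

lemma margBC (c : γ) :
    ∑ b, prOf p (fun ω => (B ω, C ω)) (b, c) = prOf p C c := by
  rw [← prOf_marginal (p := p) C B c]
  exact Finset.sum_congr rfl fun b _ => prOf_congr fun ω => by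
    simp only [Prod.ext_iff] ; tauto

lemma comb4 (f g h k : Ω → ℝ) :
    ∑ ω, (f ω + g ω - h ω - k ω) = ∑ ω, f ω + ∑ ω, g ω - ∑ ω, h ω - ∑ ω, k ω := by
  rw [Finset.sum_sub_distrib, Finset.sum_sub_distrib, Finset.sum_add_distrib]

lemma comb4p (q f g h k : Ω → ℝ) :
    ∑ ω, q ω * (f ω + g ω - h ω - k ω)
      = ∑ ω, q ω * f ω + ∑ ω, q ω * g ω - ∑ ω, q ω * h ω - ∑ ω, q ω * k ω := by
  rw [← comb4 (fun ω => q ω * f ω) (fun ω => q ω * g ω) (fun ω => q ω * h ω)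
    (fun ω => q ω * k ω)]
  exact Finset.sum_congr rfl fun ω _ => by ring

/-- From `H(C|A,B) = 0`: on the support, `C` is a function of `(A,B)`. -/
lemma funcC (hp0 : ∀ ω, 0 ≤ p ω) (h1 : condEnt p C (fun ω => (A ω, B ω)) = 0) :
    ∀ ω ω', 0 < p ω → 0 < p ω' → A ω' = A ω → B ω' = B ω → C ω' = C ω := by
  have hmono : ∀ ω : Ω, prOf p (fun ω' => (C ω', (A ω', B ω'))) (C ω, (A ω, B ω)) ≤
      prOf p (fun ω' => (A ω', B ω')) (A ω, B ω) := fun ω =>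
    prOf_mono hp0 fun ω'' h => congrArg Prod.snd h
  have key : ∀ ω, 0 < p ω →
      prOf p (fun ω' => (C ω', (A ω', B ω'))) (C ω, (A ω, B ω))
        = prOf p (fun ω' => (A ω', B ω')) (A ω, B ω) := by
    rw [condEnt, ent_omega, ent_omega] at h1
    have h1' : ∑ ω, (p ω * Real.logb 2 (prOf p (fun ω' => (A ω', B ω')) (A ω, B ω))
        - p ω * Real.logb 2 (prOf p (fun ω' => (C ω', (A ω', B ω'))) (C ω, (A ω, B ω)))) = 0 := by
      rw [Finset.sum_sub_distrib]; linarith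
    have hnn : ∀ ω ∈ Finset.univ (α := Ω),
        0 ≤ p ω * Real.logb 2 (prOf p (fun ω' => (A ω', B ω')) (A ω, B ω))
          - p ω * Real.logb 2 (prOf p (fun ω' => (C ω', (A ω', B ω'))) (C ω, (A ω, B ω))) := by
      intro ω _
      rcases eq_or_lt_of_le (hp0 ω) with h0 | h0
      · rw [← h0]; simp
      · have h2 : 0 < prOf p (fun ω' => (C ω', (A ω', B ω'))) (C ω, (A ω, B ω)) :=
          prOf_pos hp0 _ h0
        have hle := Real.logb_le_logb_of_le one_lt_two h2 (hmono ω)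
        nlinarith
    have hz := (Finset.sum_eq_zero_iff_of_nonneg hnn).mp h1'
    intro ω hω
    have hterm := hz ω (Finset.mem_univ ω)
    by_contra hne
    have hlt : prOf p (fun ω' => (C ω', (A ω', B ω'))) (C ω, (A ω, B ω)) <
        prOf p (fun ω' => (A ω', B ω')) (A ω, B ω) := lt_of_le_of_ne (hmono ω) hne
    have h2 : 0 < prOf p (fun ω' => (C ω', (A ω', B ω'))) (C ω, (A ω, B ω)) :=
      prOf_pos hp0 _ hω
    have := Real.logb_lt_logb one_lt_two h2 hlt
    nlinarith
  intro ω ω' hω hω' hA hB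
  have heq := key ω hω
  have hconc := support_eq hp0 (X := fun ω' => (A ω', B ω')) (Y := fun ω' => (C ω', (A ω', B ω')))
      (s := (A ω, B ω)) (t := (C ω, (A ω, B ω)))
      (fun ω'' h => congrArg Prod.snd h) heq.symm hω' (by show (A ω', B ω') = (A ω, B ω); rw [hA, hB])
  exact congrArg Prod.fst hconc

/-- From `I(A:B|C) = 0`: support factorization. -/
lemma factAB (hp : IsPMF p) (h2 : cmi p A B C = 0) :
    ∀ a b c, 0 < prOf p (fun ω => (A ω, C ω)) (a, c) →
      0 < prOf p (fun ω => (B ω, C ω)) (b, c) →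
      0 < prOf p (fun ω => (A ω, B ω, C ω)) (a, b, c) := by
  have hp0 := hp.1
  set x : α × β × γ → ℝ := prOf p (fun ω => (A ω, B ω, C ω)) with hxdef
  set y : α × β × γ → ℝ := fun v => if 0 < prOf p C v.2.2 then
      prOf p (fun ω => (A ω, C ω)) (v.1, v.2.2) * prOf p (fun ω => (B ω, C ω)) (v.2.1, v.2.2)
        / prOf p C v.2.2 else 0 with hydef
  have hx : ∀ v ∈ Finset.univ (α := α × β × γ), 0 ≤ x v := fun v _ => prOf_nonneg hp0 _ _
  have hy0 : ∀ v ∈ Finset.univ (α := α × β × γ), 0 ≤ y v := by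
    intro v _
    simp only [hydef]
    split
    · rename_i hc
      have h1 := prOf_nonneg hp0 (fun ω => (A ω, C ω)) (v.1, v.2.2)
      have h2 := prOf_nonneg hp0 (fun ω => (B ω, C ω)) (v.2.1, v.2.2)
      positivity
    · exact le_refl 0
  have hy : ∀ v ∈ Finset.univ (α := α × β × γ), 0 < x v → 0 < y v := by
    rintro ⟨a, b, c⟩ _ hxv
    have hAC : 0 < prOf p (fun ω => (A ω, C ω)) (a, c) :=
      lt_of_lt_of_le hxv (prOf_mono hp0 fun ω h => by
        simp only [Prod.ext_iff] at h ⊢ ; tauto)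
    have hBC : 0 < prOf p (fun ω => (B ω, C ω)) (b, c) :=
      lt_of_lt_of_le hxv (prOf_mono hp0 fun ω h => by
        simp only [Prod.ext_iff] at h ⊢ ; tauto)
    have hC : 0 < prOf p C c :=
      lt_of_lt_of_le hAC (prOf_mono hp0 fun ω h => (Prod.ext_iff.mp h).2)
    simp only [hydef, if_pos hC]
    positivity
  have hsumx : ∑ v, x v = 1 := by rw [hxdef, sum_prOf]; exact hp.2
  have hsumy : ∑ v, y v = 1 := by
    have hyrw : ∀ a b c, y (a, b, c) = if 0 < prOf p C c then
        prOf p (fun ω => (A ω, C ω)) (a, c) * prOf p (fun ω => (B ω, C ω)) (b, c)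
          / prOf p C c else 0 := fun a b c => rfl
    calc ∑ v, y v = ∑ a, ∑ b, ∑ c, y (a, b, c) := by
          rw [Fintype.sum_prod_type]
          exact Finset.sum_congr rfl fun a _ => by rw [Fintype.sum_prod_type]
      _ = ∑ a, ∑ c, ∑ b, y (a, b, c) := Finset.sum_congr rfl fun a _ => Finset.sum_comm
      _ = ∑ c, ∑ a, ∑ b, y (a, b, c) := Finset.sum_comm
      _ = ∑ c, prOf p C c := by
          refine Finset.sum_congr rfl fun c _ => ?_
          by_cases hC : 0 < prOf p C c
          · have inner : ∀ a, ∑ b, y (a, b, c) = prOf p (fun ω => (A ω, C ω)) (a, c) := by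
              intro a
              simp only [hyrw, if_pos hC]
              rw [← Finset.sum_div, ← Finset.mul_sum, margBC]
              field_simp
            rw [Finset.sum_congr rfl fun a _ => inner a, margAC]
          · have hC0 : prOf p C c = 0 := le_antisymm (not_lt.mp hC) (prOf_nonneg hp0 C c)
            simp [hyrw, hC, hC0]
      _ = 1 := by rw [sum_prOf]; exact hp.2
  have heq : ∑ v, x v * Real.logb 2 (y v / x v) = 0 := by
    have conv : ∑ v, x v * Real.logb 2 (y v / x v)
        = ∑ ω, p ω * Real.logb 2 (y (A ω, B ω, C ω) / x (A ω, B ω, C ω)) := by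
      rw [hxdef]
      exact sum_prOf_mul (fun ω => (A ω, B ω, C ω)) (fun v => Real.logb 2 (y v / x v))
    have conv2 : ∑ ω, p ω * Real.logb 2 (y (A ω, B ω, C ω) / x (A ω, B ω, C ω))
        = ∑ ω, (p ω * Real.logb 2 (prOf p (fun ω' => (A ω', C ω')) (A ω, C ω))
            + p ω * Real.logb 2 (prOf p (fun ω' => (B ω', C ω')) (B ω, C ω))
            - p ω * Real.logb 2 (prOf p (fun ω' => (A ω', B ω', C ω')) (A ω, B ω, C ω))
            - p ω * Real.logb 2 (prOf p C (C ω))) := by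
      refine Finset.sum_congr rfl fun ω _ => ?_
      rcases eq_or_lt_of_le (hp0 ω) with h0 | h0
      · rw [← h0]; ring
      · have hABC : 0 < prOf p (fun ω' => (A ω', B ω', C ω')) (A ω, B ω, C ω) :=
          prOf_pos hp0 _ h0
        have hAC : 0 < prOf p (fun ω' => (A ω', C ω')) (A ω, C ω) := prOf_pos hp0 _ h0
        have hBC : 0 < prOf p (fun ω' => (B ω', C ω')) (B ω, C ω) := prOf_pos hp0 _ h0
        have hC : 0 < prOf p C (C ω) := prOf_pos hp0 _ h0
        have hxv : x (A ω, B ω, C ω) = prOf p (fun ω' => (A ω', B ω', C ω')) (A ω, B ω, C ω) := by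
          rw [hxdef]
        have hyv : y (A ω, B ω, C ω) = prOf p (fun ω' => (A ω', C ω')) (A ω, C ω)
            * prOf p (fun ω' => (B ω', C ω')) (B ω, C ω) / prOf p C (C ω) := by
          simp only [hydef, if_pos hC]
        rw [hxv, hyv, Real.logb_div (by positivity) (by positivity),
          Real.logb_div (by positivity) (by positivity),
          Real.logb_mul (by positivity) (by positivity)]
        ring
    rw [conv, conv2, comb4]
    have e1 := ent_omega (p := p) (fun ω => (A ω, C ω))
    have e2 := ent_omega (p := p) (fun ω => (B ω, C ω))
    have e3 := ent_omega (p := p) (fun ω => (A ω, B ω, C ω))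
    have e4 := ent_omega (p := p) C
    rw [cmi, e1, e2, e3, e4] at h2
    linarith
  have hfin := gibbs_eq Finset.univ x y hx hy0 hy (le_of_eq (hsumy.trans hsumx.symm)) heq
  intro a b c hAC hBC
  have hC : 0 < prOf p C c :=
    lt_of_lt_of_le hAC (prOf_mono hp0 fun ω h => (Prod.ext_iff.mp h).2)
  have hv := hfin (a, b, c) (Finset.mem_univ _)
  have hypos : 0 < y (a, b, c) := by
    have hyv : y (a, b, c) = prOf p (fun ω => (A ω, C ω)) (a, c)
        * prOf p (fun ω => (B ω, C ω)) (b, c) / prOf p C c := by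
      simp only [hydef, if_pos hC]
    rw [hyv]
    positivity
  exact hv ▸ hypos

/-- Mass of the support-slice of `B` compatible with `(c,d)`. -/
def Bm {Ω β γ δ : Type*} [Fintype Ω] [Fintype β] [DecidableEq β] [DecidableEq γ] [DecidableEq δ]
    (p : Ω → ℝ) (B : Ω → β) (C : Ω → γ) (D : Ω → δ) (c : γ) (d : δ) : ℝ :=
  ∑ b ∈ Finset.univ.filter (fun b => 0 < prOf p (fun ω => (B ω, C ω, D ω)) (b, c, d)),
    prOf p (fun ω => (B ω, D ω)) (b, d)

lemma Bm_nonneg (hp0 : ∀ ω, 0 ≤ p ω) (c : γ) (d : δ) : 0 ≤ Bm p B C D c d :=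
  Finset.sum_nonneg fun b _ => prOf_nonneg hp0 _ _

lemma Bm_pos_of (hp0 : ∀ ω, 0 ≤ p ω) {b : β} {c : γ} {d : δ}
    (h : 0 < prOf p (fun ω => (B ω, C ω, D ω)) (b, c, d)) : 0 < Bm p B C D c d := by
  have hmem : b ∈ Finset.univ.filter
      (fun b => 0 < prOf p (fun ω => (B ω, C ω, D ω)) (b, c, d)) := by
    simp [h]
  have hle : prOf p (fun ω => (B ω, D ω)) (b, d) ≤ Bm p B C D c d :=
    Finset.single_le_sum (f := fun b' => prOf p (fun ω => (B ω, D ω)) (b', d))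
      (fun b' _ => prOf_nonneg hp0 _ _) hmem
  have hBD : 0 < prOf p (fun ω => (B ω, D ω)) (b, d) :=
    lt_of_lt_of_le h (prOf_mono hp0 fun ω hh => by
      simp only [Prod.ext_iff] at hh ⊢ ; tauto)
  linarith

lemma Bm_pos_omega (hp0 : ∀ ω, 0 ≤ p ω) {ω : Ω} (hω : 0 < p ω) :
    0 < Bm p B C D (C ω) (D ω) :=
  Bm_pos_of hp0 (prOf_pos hp0 (fun ω' => (B ω', C ω', D ω')) hω)

lemma keyAD (hp : IsPMF p) (h1 : condEnt p C (fun ω => (A ω, B ω)) = 0)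
    (h2 : cmi p A B C = 0) (a : α) (d : δ) :
    ∑ c ∈ Finset.univ.filter
        (fun c => 0 < prOf p (fun ω => (A ω, C ω, D ω)) (a, c, d)),
      Bm p B C D c d ≤ prOf p D d := by
  have hp0 := hp.1
  have hfunc := funcC hp0 h1
  have hF := factAB hp h2
  have hdisj : ∀ c ∈ Finset.univ.filter
        (fun c => 0 < prOf p (fun ω => (A ω, C ω, D ω)) (a, c, d)),
      ∀ c' ∈ Finset.univ.filter
        (fun c => 0 < prOf p (fun ω => (A ω, C ω, D ω)) (a, c, d)),
      c ≠ c' → Disjoint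
        (Finset.univ.filter (fun b => 0 < prOf p (fun ω => (B ω, C ω, D ω)) (b, c, d)))
        (Finset.univ.filter (fun b => 0 < prOf p (fun ω => (B ω, C ω, D ω)) (b, c', d))) := by
    intro c hc c' hc' hne
    rw [Finset.disjoint_left]
    intro b hb hb'
    simp only [Finset.mem_filter, Finset.mem_univ, true_and] at hb hb' hc hc'
    have hACc : 0 < prOf p (fun ω => (A ω, C ω)) (a, c) :=
      lt_of_lt_of_le hc (prOf_mono hp0 fun ω h => by
        simp only [Prod.ext_iff] at h ⊢ ; tauto)
    have hACc' : 0 < prOf p (fun ω => (A ω, C ω)) (a, c') :=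
      lt_of_lt_of_le hc' (prOf_mono hp0 fun ω h => by
        simp only [Prod.ext_iff] at h ⊢ ; tauto)
    have hBCc : 0 < prOf p (fun ω => (B ω, C ω)) (b, c) :=
      lt_of_lt_of_le hb (prOf_mono hp0 fun ω h => by
        simp only [Prod.ext_iff] at h ⊢ ; tauto)
    have hBCc' : 0 < prOf p (fun ω => (B ω, C ω)) (b, c') :=
      lt_of_lt_of_le hb' (prOf_mono hp0 fun ω h => by
        simp only [Prod.ext_iff] at h ⊢ ; tauto)
    obtain ⟨ω₀, hpω₀, hv₀⟩ := exists_of_prOf_pos hp0 (hF a b c hACc hBCc)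
    obtain ⟨ω₁, hpω₁, hv₁⟩ := exists_of_prOf_pos hp0 (hF a b c' hACc' hBCc')
    simp only [Prod.ext_iff] at hv₀ hv₁
    have : C ω₁ = C ω₀ := hfunc ω₀ ω₁ hpω₀ hpω₁
      (by rw [hv₁.1, hv₀.1]) (by rw [hv₁.2.1, hv₀.2.1])
    exact hne (by rw [← hv₀.2.2, ← hv₁.2.2, this])
  calc ∑ c ∈ Finset.univ.filter
        (fun c => 0 < prOf p (fun ω => (A ω, C ω, D ω)) (a, c, d)),
      Bm p B C D c d
      = ∑ b ∈ (Finset.univ.filter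
          (fun c => 0 < prOf p (fun ω => (A ω, C ω, D ω)) (a, c, d))).biUnion
          (fun c => Finset.univ.filter
            (fun b => 0 < prOf p (fun ω => (B ω, C ω, D ω)) (b, c, d))),
        prOf p (fun ω => (B ω, D ω)) (b, d) := (Finset.sum_biUnion hdisj).symm
    _ ≤ ∑ b, prOf p (fun ω => (B ω, D ω)) (b, d) :=
        Finset.sum_le_sum_of_subset_of_nonneg (Finset.subset_univ _)
          (fun b _ _ => prOf_nonneg hp0 _ _)
    _ = prOf p D d := margBD d

def Y1 {Ω α β γ δ : Type*} [Fintype Ω] [Fintype β]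
    [DecidableEq α] [DecidableEq β] [DecidableEq γ] [DecidableEq δ]
    (p : Ω → ℝ) (A : Ω → α) (B : Ω → β) (C : Ω → γ) (D : Ω → δ) (a : α) (c : γ) (d : δ) : ℝ :=
  if 0 < prOf p (fun ω => (A ω, C ω, D ω)) (a, c, d) then
    prOf p (fun ω => (A ω, D ω)) (a, d) * Bm p B C D c d / prOf p D d
  else 0

def Y2 {Ω β γ δ : Type*} [Fintype Ω] [Fintype β]
    [DecidableEq β] [DecidableEq γ] [DecidableEq δ]
    (p : Ω → ℝ) (B : Ω → β) (C : Ω → γ) (D : Ω → δ) (b : β) (c : γ) (d : δ) : ℝ :=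
  if 0 < prOf p (fun ω => (B ω, C ω, D ω)) (b, c, d) then
    prOf p (fun ω => (C ω, D ω)) (c, d) * prOf p (fun ω => (B ω, D ω)) (b, d) / Bm p B C D c d
  else 0

lemma Y1_nonneg (hp0 : ∀ ω, 0 ≤ p ω) (a : α) (c : γ) (d : δ) : 0 ≤ Y1 p A B C D a c d := by
  rw [Y1]
  split
  · have n1 := prOf_nonneg hp0 (fun ω => (A ω, D ω)) (a, d)
    have n2 := Bm_nonneg (B := B) (C := C) (D := D) hp0 c d
    have n3 := prOf_nonneg hp0 D d
    positivity
  · exact le_refl 0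

lemma Y1_pos (hp0 : ∀ ω, 0 ≤ p ω) {a : α} {c : γ} {d : δ}
    (h : 0 < prOf p (fun ω => (A ω, C ω, D ω)) (a, c, d)) : 0 < Y1 p A B C D a c d := by
  obtain ⟨ω, hpω, hv⟩ := exists_of_prOf_pos hp0 h
  simp only [Prod.ext_iff] at hv
  have hAD : 0 < prOf p (fun ω => (A ω, D ω)) (a, d) :=
    lt_of_lt_of_le h (prOf_mono hp0 fun ω hh => by
      simp only [Prod.ext_iff] at hh ⊢ ; tauto)
  have hD : 0 < prOf p D d :=
    lt_of_lt_of_le hAD (prOf_mono hp0 fun ω hh => (Prod.ext_iff.mp hh).2)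
  have hBm : 0 < Bm p B C D c d := by
    rw [← hv.2.1, ← hv.2.2]
    exact Bm_pos_omega hp0 hpω
  rw [Y1, if_pos h]
  positivity

lemma Y2_nonneg (hp0 : ∀ ω, 0 ≤ p ω) (b : β) (c : γ) (d : δ) : 0 ≤ Y2 p B C D b c d := by
  rw [Y2]
  split
  · have n1 := prOf_nonneg hp0 (fun ω => (C ω, D ω)) (c, d)
    have n2 := prOf_nonneg hp0 (fun ω => (B ω, D ω)) (b, d)
    have n3 := Bm_nonneg (B := B) (C := C) (D := D) hp0 c d
    positivity
  · exact le_refl 0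

lemma Y2_pos (hp0 : ∀ ω, 0 ≤ p ω) {b : β} {c : γ} {d : δ}
    (h : 0 < prOf p (fun ω => (B ω, C ω, D ω)) (b, c, d)) : 0 < Y2 p B C D b c d := by
  have hCD : 0 < prOf p (fun ω => (C ω, D ω)) (c, d) :=
    lt_of_lt_of_le h (prOf_mono hp0 fun ω hh => by
      simp only [Prod.ext_iff] at hh ⊢ ; tauto)
  have hBD : 0 < prOf p (fun ω => (B ω, D ω)) (b, d) :=
    lt_of_lt_of_le h (prOf_mono hp0 fun ω hh => by
      simp only [Prod.ext_iff] at hh ⊢ ; tauto)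
  have hBm : 0 < Bm p B C D c d := Bm_pos_of hp0 h
  rw [Y2, if_pos h]
  positivity

lemma step1 (hp : IsPMF p) (h1 : condEnt p C (fun ω => (A ω, B ω)) = 0)
    (h2 : cmi p A B C = 0) :
    ∑ ω, p ω * (Real.logb 2 (prOf p (fun ω' => (A ω', D ω')) (A ω, D ω))
      + Real.logb 2 (Bm p B C D (C ω) (D ω))
      - Real.logb 2 (prOf p (fun ω' => (A ω', C ω', D ω')) (A ω, C ω, D ω))
      - Real.logb 2 (prOf p D (D ω))) ≤ 0 := by
  have hp0 := hp.1
  calc ∑ ω, p ω * (Real.logb 2 (prOf p (fun ω' => (A ω', D ω')) (A ω, D ω))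
      + Real.logb 2 (Bm p B C D (C ω) (D ω))
      - Real.logb 2 (prOf p (fun ω' => (A ω', C ω', D ω')) (A ω, C ω, D ω))
      - Real.logb 2 (prOf p D (D ω)))
      = ∑ ω, p ω * Real.logb 2 (Y1 p A B C D (A ω) (C ω) (D ω)
          / prOf p (fun ω' => (A ω', C ω', D ω')) (A ω, C ω, D ω)) := by
        refine Finset.sum_congr rfl fun ω _ => ?_
        rcases eq_or_lt_of_le (hp0 ω) with h0 | h0
        · rw [← h0]; ring
        · have hACD : 0 < prOf p (fun ω' => (A ω', C ω', D ω')) (A ω, C ω, D ω) :=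
            prOf_pos hp0 _ h0
          have hAD : 0 < prOf p (fun ω' => (A ω', D ω')) (A ω, D ω) := prOf_pos hp0 _ h0
          have hD : 0 < prOf p D (D ω) := prOf_pos hp0 _ h0
          have hBm : 0 < Bm p B C D (C ω) (D ω) := Bm_pos_omega hp0 h0
          rw [Y1, if_pos hACD, Real.logb_div (by positivity) (by positivity),
            Real.logb_div (by positivity) (by positivity),
            Real.logb_mul (by positivity) (by positivity)]
          ring
    _ = ∑ v : α × γ × δ, prOf p (fun ω => (A ω, C ω, D ω)) v
          * Real.logb 2 (Y1 p A B C D v.1 v.2.1 v.2.2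
            / prOf p (fun ω => (A ω, C ω, D ω)) v) := by
        rw [sum_prOf_mul (p := p) (fun ω => (A ω, C ω, D ω))
          (fun v => Real.logb 2 (Y1 p A B C D v.1 v.2.1 v.2.2
            / prOf p (fun ω => (A ω, C ω, D ω)) v))]
    _ = ∑ a, ∑ cd : γ × δ, prOf p (fun ω => (A ω, C ω, D ω)) (a, cd)
          * Real.logb 2 (Y1 p A B C D a cd.1 cd.2
            / prOf p (fun ω => (A ω, C ω, D ω)) (a, cd)) := by
        rw [Fintype.sum_prod_type]
    _ = ∑ a, ∑ c, ∑ d, prOf p (fun ω => (A ω, C ω, D ω)) (a, c, d)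
          * Real.logb 2 (Y1 p A B C D a c d
            / prOf p (fun ω => (A ω, C ω, D ω)) (a, c, d)) := by
        exact Finset.sum_congr rfl fun a _ => by rw [Fintype.sum_prod_type]
    _ = ∑ a, ∑ d, ∑ c, prOf p (fun ω => (A ω, C ω, D ω)) (a, c, d)
          * Real.logb 2 (Y1 p A B C D a c d
            / prOf p (fun ω => (A ω, C ω, D ω)) (a, c, d)) :=
        Finset.sum_congr rfl fun a _ => Finset.sum_comm
    _ ≤ 0 := by
        refine Finset.sum_nonpos fun a _ => Finset.sum_nonpos fun d _ => ?_
        refine gibbs_le Finset.univ (fun c => prOf p (fun ω => (A ω, C ω, D ω)) (a, c, d))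
          (fun c => Y1 p A B C D a c d) (fun c _ => prOf_nonneg hp0 _ _)
          (fun c _ => Y1_nonneg hp0 a c d) (fun c _ hc => Y1_pos hp0 hc) ?_
        have hrw : ∀ c : γ, Y1 p A B C D a c d
            = if 0 < prOf p (fun ω => (A ω, C ω, D ω)) (a, c, d) then
                prOf p (fun ω => (A ω, D ω)) (a, d) * Bm p B C D c d / prOf p D d
              else 0 := fun c => by rw [Y1]
        calc ∑ c, Y1 p A B C D a c d
            = ∑ c ∈ Finset.univ.filter
                (fun c => 0 < prOf p (fun ω => (A ω, C ω, D ω)) (a, c, d)),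
                prOf p (fun ω => (A ω, D ω)) (a, d) * Bm p B C D c d / prOf p D d := by
              rw [Finset.sum_filter]
              exact Finset.sum_congr rfl fun c _ => hrw c
          _ = prOf p (fun ω => (A ω, D ω)) (a, d) * (∑ c ∈ Finset.univ.filter
                (fun c => 0 < prOf p (fun ω => (A ω, C ω, D ω)) (a, c, d)),
                Bm p B C D c d) / prOf p D d := by
              rw [← Finset.sum_div, ← Finset.mul_sum]
          _ ≤ prOf p (fun ω => (A ω, D ω)) (a, d) := by
              rcases eq_or_lt_of_le (prOf_nonneg hp0 (fun ω => (A ω, D ω)) (a, d)) with hAD | hAD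
              · rw [← hAD]
                simp
              · have hD : 0 < prOf p D d :=
                  lt_of_lt_of_le hAD (prOf_mono hp0 fun ω hh => (Prod.ext_iff.mp hh).2)
                rw [div_le_iff₀ hD]
                exact mul_le_mul_of_nonneg_left (keyAD hp h1 h2 a d) hAD.le
          _ = ∑ c, prOf p (fun ω => (A ω, C ω, D ω)) (a, c, d) := (margACD a d).symm

lemma step2 (hp : IsPMF p) :
    ∑ ω, p ω * (Real.logb 2 (prOf p (fun ω' => (C ω', D ω')) (C ω, D ω))
      + Real.logb 2 (prOf p (fun ω' => (B ω', D ω')) (B ω, D ω))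
      - Real.logb 2 (prOf p (fun ω' => (B ω', C ω', D ω')) (B ω, C ω, D ω))
      - Real.logb 2 (Bm p B C D (C ω) (D ω))) ≤ 0 := by
  have hp0 := hp.1
  calc ∑ ω, p ω * (Real.logb 2 (prOf p (fun ω' => (C ω', D ω')) (C ω, D ω))
      + Real.logb 2 (prOf p (fun ω' => (B ω', D ω')) (B ω, D ω))
      - Real.logb 2 (prOf p (fun ω' => (B ω', C ω', D ω')) (B ω, C ω, D ω))
      - Real.logb 2 (Bm p B C D (C ω) (D ω)))
      = ∑ ω, p ω * Real.logb 2 (Y2 p B C D (B ω) (C ω) (D ω)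
          / prOf p (fun ω' => (B ω', C ω', D ω')) (B ω, C ω, D ω)) := by
        refine Finset.sum_congr rfl fun ω _ => ?_
        rcases eq_or_lt_of_le (hp0 ω) with h0 | h0
        · rw [← h0]; ring
        · have hBCD : 0 < prOf p (fun ω' => (B ω', C ω', D ω')) (B ω, C ω, D ω) :=
            prOf_pos hp0 _ h0
          have hBD : 0 < prOf p (fun ω' => (B ω', D ω')) (B ω, D ω) := prOf_pos hp0 _ h0
          have hCD : 0 < prOf p (fun ω' => (C ω', D ω')) (C ω, D ω) := prOf_pos hp0 _ h0
          have hBm : 0 < Bm p B C D (C ω) (D ω) := Bm_pos_omega hp0 h0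
          rw [Y2, if_pos hBCD, Real.logb_div (by positivity) (by positivity),
            Real.logb_div (by positivity) (by positivity),
            Real.logb_mul (by positivity) (by positivity)]
          ring
    _ = ∑ v : β × γ × δ, prOf p (fun ω => (B ω, C ω, D ω)) v
          * Real.logb 2 (Y2 p B C D v.1 v.2.1 v.2.2
            / prOf p (fun ω => (B ω, C ω, D ω)) v) := by
        rw [sum_prOf_mul (p := p) (fun ω => (B ω, C ω, D ω))
          (fun v => Real.logb 2 (Y2 p B C D v.1 v.2.1 v.2.2
            / prOf p (fun ω => (B ω, C ω, D ω)) v))]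
    _ = ∑ b, ∑ cd : γ × δ, prOf p (fun ω => (B ω, C ω, D ω)) (b, cd)
          * Real.logb 2 (Y2 p B C D b cd.1 cd.2
            / prOf p (fun ω => (B ω, C ω, D ω)) (b, cd)) := by
        rw [Fintype.sum_prod_type]
    _ = ∑ cd : γ × δ, ∑ b, prOf p (fun ω => (B ω, C ω, D ω)) (b, cd)
          * Real.logb 2 (Y2 p B C D b cd.1 cd.2
            / prOf p (fun ω => (B ω, C ω, D ω)) (b, cd)) := Finset.sum_comm
    _ ≤ 0 := by
        refine Finset.sum_nonpos fun cd _ => ?_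
        obtain ⟨c, d⟩ := cd
        refine gibbs_le Finset.univ (fun b => prOf p (fun ω => (B ω, C ω, D ω)) (b, c, d))
          (fun b => Y2 p B C D b c d) (fun b _ => prOf_nonneg hp0 _ _)
          (fun b _ => Y2_nonneg hp0 b c d) (fun b _ hb => Y2_pos hp0 hb) ?_
        have hrw : ∀ b : β, Y2 p B C D b c d
            = if 0 < prOf p (fun ω => (B ω, C ω, D ω)) (b, c, d) then
                prOf p (fun ω => (C ω, D ω)) (c, d) * prOf p (fun ω => (B ω, D ω)) (b, d)
                  / Bm p B C D c d
              else 0 := fun b => by rw [Y2]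
        calc ∑ b, Y2 p B C D b c d
            = ∑ b ∈ Finset.univ.filter
                (fun b => 0 < prOf p (fun ω => (B ω, C ω, D ω)) (b, c, d)),
                prOf p (fun ω => (C ω, D ω)) (c, d) * prOf p (fun ω => (B ω, D ω)) (b, d)
                  / Bm p B C D c d := by
              rw [Finset.sum_filter]
              exact Finset.sum_congr rfl fun b _ => hrw b
          _ = prOf p (fun ω => (C ω, D ω)) (c, d) * Bm p B C D c d / Bm p B C D c d := by
              rw [← Finset.sum_div, ← Finset.mul_sum, Bm]
          _ ≤ prOf p (fun ω => (C ω, D ω)) (c, d) := by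
              rcases eq_or_lt_of_le (Bm_nonneg (p := p) (B := B) (C := C) (D := D) hp0 c d)
                with hBm | hBm
              · rw [← hBm, div_zero]
                exact prOf_nonneg hp0 _ _
              · rw [mul_div_assoc, div_self hBm.ne', mul_one]
          _ = ∑ b, prOf p (fun ω => (B ω, C ω, D ω)) (b, c, d) := (margBCD c d).symm

end Main
end NCIproof

theorem new_conditional_inequality {Ω α β γ δ : Type*} [Fintype Ω] [Fintype α] [Fintype β] [Fintype γ] [Fintype δ]
    [DecidableEq α] [DecidableEq β] [DecidableEq γ] [DecidableEq δ]
    (p : Ω → ℝ) (hp : IsPMF p)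
    (A : Ω → α) (B : Ω → β) (C : Ω → γ) (D : Ω → δ)
    (h1 : condEnt p C (fun ω => (A ω, B ω)) = 0) (h2 : cmi p A B C = 0) :
    mi p C D ≤ cmi p C D A + cmi p C D B + mi p A B := by

  have hp0 := hp.1
  have st1 := NCIproof.step1 (D := D) hp h1 h2
  have st2 := NCIproof.step2 (p := p) (B := B) (C := C) (D := D) hp
  rw [NCIproof.comb4p] at st1 st2
  have eC : ent p C = -∑ ω, p ω * Real.logb 2 (prOf p C (C ω)) := NCIproof.ent_omega C
  have eD : ent p D = -∑ ω, p ω * Real.logb 2 (prOf p D (D ω)) := NCIproof.ent_omega D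
  have eA : ent p A = -∑ ω, p ω * Real.logb 2 (prOf p A (A ω)) := NCIproof.ent_omega A
  have eB : ent p B = -∑ ω, p ω * Real.logb 2 (prOf p B (B ω)) := NCIproof.ent_omega B
  have eCD : ent p (fun ω => (C ω, D ω))
      = -∑ ω, p ω * Real.logb 2 (prOf p (fun ω' => (C ω', D ω')) (C ω, D ω)) :=
    NCIproof.ent_omega _
  have eAB : ent p (fun ω => (A ω, B ω))
      = -∑ ω, p ω * Real.logb 2 (prOf p (fun ω' => (A ω', B ω')) (A ω, B ω)) :=
    NCIproof.ent_omega _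
  have eAC : ent p (fun ω => (A ω, C ω))
      = -∑ ω, p ω * Real.logb 2 (prOf p (fun ω' => (A ω', C ω')) (A ω, C ω)) :=
    NCIproof.ent_omega _
  have eBC : ent p (fun ω => (B ω, C ω))
      = -∑ ω, p ω * Real.logb 2 (prOf p (fun ω' => (B ω', C ω')) (B ω, C ω)) :=
    NCIproof.ent_omega _
  have eABC : ent p (fun ω => (A ω, B ω, C ω))
      = -∑ ω, p ω * Real.logb 2 (prOf p (fun ω' => (A ω', B ω', C ω')) (A ω, B ω, C ω)) :=
    NCIproof.ent_omega _
  have eCA : ent p (fun ω => (C ω, A ω))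
      = -∑ ω, p ω * Real.logb 2 (prOf p (fun ω' => (A ω', C ω')) (A ω, C ω)) := by
    rw [NCIproof.ent_omega]
    refine neg_inj.mpr (Finset.sum_congr rfl fun ω _ => ?_)
    have h : prOf p (fun ω' => (C ω', A ω')) (C ω, A ω)
        = prOf p (fun ω' => (A ω', C ω')) (A ω, C ω) :=
      NCIproof.prOf_congr fun ω' => by simp only [Prod.ext_iff]; tauto
    show p ω * Real.logb 2 (prOf p (fun ω' => (C ω', A ω')) (C ω, A ω)) = _
    rw [h]
  have eDA : ent p (fun ω => (D ω, A ω))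
      = -∑ ω, p ω * Real.logb 2 (prOf p (fun ω' => (A ω', D ω')) (A ω, D ω)) := by
    rw [NCIproof.ent_omega]
    refine neg_inj.mpr (Finset.sum_congr rfl fun ω _ => ?_)
    have h : prOf p (fun ω' => (D ω', A ω')) (D ω, A ω)
        = prOf p (fun ω' => (A ω', D ω')) (A ω, D ω) :=
      NCIproof.prOf_congr fun ω' => by simp only [Prod.ext_iff]; tauto
    show p ω * Real.logb 2 (prOf p (fun ω' => (D ω', A ω')) (D ω, A ω)) = _
    rw [h]
  have eCDA : ent p (fun ω => (C ω, D ω, A ω))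
      = -∑ ω, p ω * Real.logb 2 (prOf p (fun ω' => (A ω', C ω', D ω')) (A ω, C ω, D ω)) := by
    rw [NCIproof.ent_omega]
    refine neg_inj.mpr (Finset.sum_congr rfl fun ω _ => ?_)
    have h : prOf p (fun ω' => (C ω', D ω', A ω')) (C ω, D ω, A ω)
        = prOf p (fun ω' => (A ω', C ω', D ω')) (A ω, C ω, D ω) :=
      NCIproof.prOf_congr fun ω' => by simp only [Prod.ext_iff]; tauto
    show p ω * Real.logb 2 (prOf p (fun ω' => (C ω', D ω', A ω')) (C ω, D ω, A ω)) = _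
    rw [h]
  have eCB : ent p (fun ω => (C ω, B ω))
      = -∑ ω, p ω * Real.logb 2 (prOf p (fun ω' => (B ω', C ω')) (B ω, C ω)) := by
    rw [NCIproof.ent_omega]
    refine neg_inj.mpr (Finset.sum_congr rfl fun ω _ => ?_)
    have h : prOf p (fun ω' => (C ω', B ω')) (C ω, B ω)
        = prOf p (fun ω' => (B ω', C ω')) (B ω, C ω) :=
      NCIproof.prOf_congr fun ω' => by simp only [Prod.ext_iff]; tauto
    show p ω * Real.logb 2 (prOf p (fun ω' => (C ω', B ω')) (C ω, B ω)) = _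
    rw [h]
  have eDB : ent p (fun ω => (D ω, B ω))
      = -∑ ω, p ω * Real.logb 2 (prOf p (fun ω' => (B ω', D ω')) (B ω, D ω)) := by
    rw [NCIproof.ent_omega]
    refine neg_inj.mpr (Finset.sum_congr rfl fun ω _ => ?_)
    have h : prOf p (fun ω' => (D ω', B ω')) (D ω, B ω)
        = prOf p (fun ω' => (B ω', D ω')) (B ω, D ω) :=
      NCIproof.prOf_congr fun ω' => by simp only [Prod.ext_iff]; tauto
    show p ω * Real.logb 2 (prOf p (fun ω' => (D ω', B ω')) (D ω, B ω)) = _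
    rw [h]
  have eCDB : ent p (fun ω => (C ω, D ω, B ω))
      = -∑ ω, p ω * Real.logb 2 (prOf p (fun ω' => (B ω', C ω', D ω')) (B ω, C ω, D ω)) := by
    rw [NCIproof.ent_omega]
    refine neg_inj.mpr (Finset.sum_congr rfl fun ω _ => ?_)
    have h : prOf p (fun ω' => (C ω', D ω', B ω')) (C ω, D ω, B ω)
        = prOf p (fun ω' => (B ω', C ω', D ω')) (B ω, C ω, D ω) :=
      NCIproof.prOf_congr fun ω' => by simp only [Prod.ext_iff]; tauto
    show p ω * Real.logb 2 (prOf p (fun ω' => (C ω', D ω', B ω')) (C ω, D ω, B ω)) = _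
    rw [h]
  have eCAB : ent p (fun ω => (C ω, (A ω, B ω)))
      = -∑ ω, p ω * Real.logb 2 (prOf p (fun ω' => (A ω', B ω', C ω')) (A ω, B ω, C ω)) := by
    rw [NCIproof.ent_omega]
    refine neg_inj.mpr (Finset.sum_congr rfl fun ω _ => ?_)
    have h : prOf p (fun ω' => (C ω', (A ω', B ω'))) (C ω, (A ω, B ω))
        = prOf p (fun ω' => (A ω', B ω', C ω')) (A ω, B ω, C ω) :=
      NCIproof.prOf_congr fun ω' => by simp only [Prod.ext_iff]; tauto
    show p ω * Real.logb 2 (prOf p (fun ω' => (C ω', (A ω', B ω'))) (C ω, (A ω, B ω))) = _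
    rw [h]
  simp only [condEnt] at h1
  simp only [cmi] at h2
  simp only [mi, cmi]
  rw [eCAB, eAB] at h1
  rw [eAC, eBC, eABC, eC] at h2
  rw [eC, eD, eCD, eCA, eDA, eCDA, eA, eCB, eDB, eCDB, eB, eAB]
  linarith [st1, st2]

end
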